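/- For the symmetric/antisymmetric discrimination protocol with ρ₀ = (1/6)·[[2,0,0,0],[0,1,1,0],[0,1,1,0],[0,0,0,2]] (random symmetric Bell state) and ρ₁ = (1/2)·[[0,0,0,0],[0,1,−1,0],[0,−1,1,0],[0,0,0,0]] = |Ψ₋⟩⟨Ψ₋|: the POVM Π₀ = |00⟩⟨00|+|11⟩⟨11|, Π₁ = |01⟩⟨01|+|10⟩⟨10| achieves (1/2)Tr[Π₀ρ₀+Π₁ρ₁] = 5/6, and the dual solution Y = [[1/6,0,0,0],[0,1/4,−1/12,0],[0,−1/12,1/4,0],[0,0,0,1/6]], Q₀ = 0, Q₁ = (1/3)|Φ₊⟩⟨Φ₊| is feasible with Tr[Y] = 5/6. Hence for any POVM {Π₀,Π₁} with positive semidefinite partial transposes, (1/2)Tr[Π₀ρ₀+Π₁ρ₁] ≤ 5/6. -/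

import Mathlib

open Matrix ComplexOrder

noncomputable def rho0 : Matrix (Fin 4) (Fin 4) ℂ :=
  (1/6 : ℂ) • !![2,0,0,0; 0,1,1,0; 0,1,1,0; 0,0,0,2]

noncomputable def rho1 : Matrix (Fin 4) (Fin 4) ℂ :=
  (1/6 : ℂ) • !![1,0,0,0; 0,2,-1,0; 0,-1,2,0; 0,0,0,1]

/-- Combine indices for the partial transpose on the second qubit. -/
def comb (i j : Fin 4) : Fin 4 := ⟨2 * (i.val / 2) + j.val % 2, by omega⟩

/-- Partial transpose with respect to the second qubit. -/
def ptB (M : Matrix (Fin 4) (Fin 4) ℂ) : Matrix (Fin 4) (Fin 4) ℂ :=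
  Matrix.of fun i j => M (comb i j) (comb j i)

noncomputable def rhoAnti : Matrix (Fin 4) (Fin 4) ℂ :=
  (1/2 : ℂ) • !![0,0,0,0; 0,1,-1,0; 0,-1,1,0; 0,0,0,0]

noncomputable def s2 : ℂ := (Real.sqrt 2 : ℝ)

noncomputable def bellPhiP : Fin 4 → ℂ := ![1/s2, 0, 0, 1/s2]

noncomputable def outer (v : Fin 4 → ℂ) : Matrix (Fin 4) (Fin 4) ℂ :=
  Matrix.vecMulVec v (star v)

noncomputable def Pi0 : Matrix (Fin 4) (Fin 4) ℂ := !![1,0,0,0; 0,0,0,0; 0,0,0,0; 0,0,0,1]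
noncomputable def Pi1 : Matrix (Fin 4) (Fin 4) ℂ := !![0,0,0,0; 0,1,0,0; 0,0,1,0; 0,0,0,0]

noncomputable def Ydual : Matrix (Fin 4) (Fin 4) ℂ :=
  !![1/6,0,0,0; 0,1/4,-(1/12),0; 0,-(1/12),1/4,0; 0,0,0,1/6]

noncomputable def Q1dual : Matrix (Fin 4) (Fin 4) ℂ := (1/3 : ℂ) • outer bellPhiP

/- ### Auxiliary lemmas -/

lemma trace_nonneg_of_psd {n : ℕ} {A : Matrix (Fin n) (Fin n) ℂ} (hA : A.PosSemidef) :
    0 ≤ A.trace := by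
  rw [Matrix.trace]
  refine Finset.sum_nonneg fun i _ => ?_
  have := hA.dotProduct_mulVec_nonneg (Pi.single i 1)
  simpa [Matrix.mulVec, dotProduct, Pi.single_apply, apply_ite, mul_ite] using this

open scoped MatrixOrder in
lemma trace_mul_nonneg {n : ℕ} {A B : Matrix (Fin n) (Fin n) ℂ}
    (hA : A.PosSemidef) (hB : B.PosSemidef) : 0 ≤ (A * B).trace := by
  have hB0 : 0 ≤ B := Matrix.nonneg_iff_posSemidef.mpr hB
  have h1 : A * B = A * (CFC.sqrt B * CFC.sqrt B) := by rw [CFC.sqrt_mul_sqrt_self B hB0]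
  have h3 : (CFC.sqrt B * A * CFC.sqrt B).PosSemidef := by
    have := hA.mul_mul_conjTranspose_same (CFC.sqrt B)
    have hs : (CFC.sqrt B)ᴴ = CFC.sqrt B := (CFC.sqrt_nonneg B).isSelfAdjoint
    rwa [hs] at this
  calc (0:ℂ) ≤ (CFC.sqrt B * A * CFC.sqrt B).trace := trace_nonneg_of_psd h3
    _ = (A * B).trace := by
        rw [h1, ← Matrix.mul_assoc, Matrix.trace_mul_cycle A (CFC.sqrt B) (CFC.sqrt B)]

lemma trace_ptB_swap (P Q : Matrix (Fin 4) (Fin 4) ℂ) :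
    (P * ptB Q).trace = (ptB P * Q).trace := by
  simp only [Matrix.trace, Matrix.diag, Matrix.mul_apply, ptB, Matrix.of_apply,
    Fin.sum_univ_four, show comb 0 0 = 0 from rfl, show comb 0 1 = 1 from rfl,
    show comb 0 2 = 0 from rfl, show comb 0 3 = 1 from rfl,
    show comb 1 0 = 0 from rfl, show comb 1 1 = 1 from rfl,
    show comb 1 2 = 0 from rfl, show comb 1 3 = 1 from rfl,
    show comb 2 0 = 2 from rfl, show comb 2 1 = 3 from rfl,
    show comb 2 2 = 2 from rfl, show comb 2 3 = 3 from rfl,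
    show comb 3 0 = 2 from rfl, show comb 3 1 = 3 from rfl,
    show comb 3 2 = 2 from rfl, show comb 3 3 = 3 from rfl]
  ring

lemma ptB_zero : ptB 0 = 0 := by ext i j; simp [ptB]

lemma ptB_smul (c : ℂ) (M : Matrix (Fin 4) (Fin 4) ℂ) : ptB (c • M) = c • ptB M := by
  ext i j; simp [ptB]

lemma ptB_explicit (a b c d e f g h i' j' k l m n o p : ℂ) :
    ptB !![a,b,c,d; e,f,g,h; i',j',k,l; m,n,o,p] =
      !![a,e,c,g; b,f,d,h; i',m,k,o; j',n,l,p] := by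
  ext i j
  fin_cases i <;> fin_cases j <;> rfl

lemma s2_sq : s2 * s2 = 2 := by
  rw [s2, ← Complex.ofReal_mul, Real.mul_self_sqrt (by norm_num)]
  norm_num

lemma s2_conj : (starRingEnd ℂ) s2 = s2 := Complex.conj_ofReal _

lemma hs : (1:ℂ)/s2 * (1/s2) = 1/2 := by
  rw [div_mul_div_comm, one_mul, s2_sq]

lemma Q1_explicit : Q1dual = (1/6 : ℂ) • !![1,0,0,1; 0,0,0,0; 0,0,0,0; 1,0,0,1] := by
  ext i j
  simp only [Q1dual, outer, Matrix.smul_apply, Matrix.vecMulVec_apply]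
  fin_cases i <;> fin_cases j <;>
    simp [Q1dual, outer, bellPhiP, Matrix.vecMulVec_apply, Complex.star_def, map_div₀,
      Matrix.vecHead, Matrix.vecTail, s2_conj, Complex.conj_ofReal,
      show ((Real.sqrt 2:ℝ):ℂ) = s2 from rfl] <;>
  · rw [show (3:ℂ)⁻¹ * (s2⁻¹ * s2⁻¹) = (1/s2 * (1/s2))/3 by ring, hs]; norm_num

lemma sixth_nonneg : (0:ℂ) ≤ 1/6 := by
  rw [Complex.le_def]; norm_num

lemma hPi0 : Pi0.PosSemidef := by
  refine Matrix.PosSemidef.of_dotProduct_mulVec_nonneg ?_ ?_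
  · ext i j
    fin_cases i <;> fin_cases j <;>
      simp [Pi0, Matrix.conjTranspose_apply, Matrix.vecHead, Matrix.vecTail]
  · intro x
    have h : star x ⬝ᵥ Pi0 *ᵥ x = star (x 0) * x 0 + star (x 3) * x 3 := by
      simp [Pi0, dotProduct, Matrix.mulVec, Fin.sum_univ_four, Matrix.vecHead, Matrix.vecTail]
    rw [h]
    exact add_nonneg (star_mul_self_nonneg _) (star_mul_self_nonneg _)

lemma hPi1 : Pi1.PosSemidef := by
  refine Matrix.PosSemidef.of_dotProduct_mulVec_nonneg ?_ ?_
  · ext i j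
    fin_cases i <;> fin_cases j <;>
      simp [Pi1, Matrix.conjTranspose_apply, Matrix.vecHead, Matrix.vecTail]
  · intro x
    have h : star x ⬝ᵥ Pi1 *ᵥ x = star (x 1) * x 1 + star (x 2) * x 2 := by
      simp [Pi1, dotProduct, Matrix.mulVec, Fin.sum_univ_four, Matrix.vecHead, Matrix.vecTail]
    rw [h]
    exact add_nonneg (star_mul_self_nonneg _) (star_mul_self_nonneg _)

lemma hQ1 : Q1dual.PosSemidef := by
  rw [Q1_explicit]
  refine Matrix.PosSemidef.of_dotProduct_mulVec_nonneg ?_ ?_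
  · ext i j
    fin_cases i <;> fin_cases j <;>
      simp [Matrix.conjTranspose_apply, Matrix.vecHead, Matrix.vecTail]
  · intro x
    have h : star x ⬝ᵥ ((1/6 : ℂ) • !![1,0,0,1; 0,0,0,0; 0,0,0,0; 1,0,0,1]) *ᵥ x
        = (1/6 : ℂ) * ((starRingEnd ℂ) (x 0 + x 3) * (x 0 + x 3)) := by
      simp [dotProduct, Matrix.mulVec, Fin.sum_univ_four, Matrix.vecHead, Matrix.vecTail,
        map_add]
      ring
    rw [h]
    exact mul_nonneg sixth_nonneg (star_mul_self_nonneg _)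

lemma hA0 : (Ydual - ptB 0 - (1/2 : ℂ) • rho0).PosSemidef := by
  have he : Ydual - ptB 0 - (1/2 : ℂ) • rho0
      = !![0,0,0,0; 0,1/6,-(1/6),0; 0,-(1/6),1/6,0; 0,0,0,0] := by
    rw [ptB_zero]
    ext i j
    fin_cases i <;> fin_cases j <;>
      simp [Ydual, rho0, Matrix.vecHead, Matrix.vecTail] <;> norm_num
  rw [he]
  refine Matrix.PosSemidef.of_dotProduct_mulVec_nonneg ?_ ?_
  · ext i j
    fin_cases i <;> fin_cases j <;>
      simp [Matrix.conjTranspose_apply, Matrix.vecHead, Matrix.vecTail]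
  · intro x
    have h : star x ⬝ᵥ (!![0,0,0,0; 0,1/6,-(1/6),0; 0,-(1/6),1/6,0; 0,0,0,0]
          : Matrix (Fin 4) (Fin 4) ℂ) *ᵥ x
        = (1/6 : ℂ) * ((starRingEnd ℂ) (x 1 - x 2) * (x 1 - x 2)) := by
      simp [dotProduct, Matrix.mulVec, Fin.sum_univ_four, Matrix.vecHead, Matrix.vecTail,
        map_sub]
      ring
    rw [h]
    exact mul_nonneg sixth_nonneg (star_mul_self_nonneg _)

lemma hA1 : (Ydual - ptB Q1dual - (1/2 : ℂ) • rhoAnti).PosSemidef := by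
  have he : Ydual - ptB Q1dual - (1/2 : ℂ) • rhoAnti = 0 := by
    rw [Q1_explicit, ptB_smul, ptB_explicit]
    ext i j
    fin_cases i <;> fin_cases j <;>
      simp [Ydual, rhoAnti, Matrix.vecHead, Matrix.vecTail] <;> norm_num
  rw [he]
  exact Matrix.PosSemidef.zero

theorem stmt17 :
    -- the computational-basis-XOR POVM is valid and achieves 5/6:
    Pi0.PosSemidef ∧ Pi1.PosSemidef ∧ Pi0 + Pi1 = 1 ∧
    (1/2 : ℂ) * ((Pi0 * rho0 + Pi1 * rhoAnti).trace) = 5/6 ∧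
    -- the dual solution Y, Q₀ = 0, Q₁ = (1/3)|Φ₊⟩⟨Φ₊| is feasible with value 5/6:
    Q1dual.PosSemidef ∧
    (Ydual - ptB 0 - (1/2 : ℂ) • rho0).PosSemidef ∧
    (Ydual - ptB Q1dual - (1/2 : ℂ) • rhoAnti).PosSemidef ∧
    Ydual.trace = 5/6 ∧
    -- hence the PPT (and so LOCC) bound:
    (∀ P0 P1 : Matrix (Fin 4) (Fin 4) ℂ,
      P0.PosSemidef → P1.PosSemidef → P0 + P1 = 1 →
      (ptB P0).PosSemidef → (ptB P1).PosSemidef →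
      ((1/2 : ℂ) * ((P0 * rho0 + P1 * rhoAnti).trace)).re ≤ 5/6) := by
  have hYtr : Ydual.trace = 5/6 := by
    simp [Ydual, Matrix.trace, Matrix.diag, Fin.sum_univ_four, Matrix.vecHead, Matrix.vecTail]
    norm_num
  refine ⟨hPi0, hPi1, ?_, ?_, hQ1, hA0, hA1, hYtr, ?_⟩
  · ext i j
    fin_cases i <;> fin_cases j <;>
      simp [Pi0, Pi1, Matrix.one_apply, Matrix.vecHead, Matrix.vecTail]
  · simp [Pi0, Pi1, rho0, rhoAnti, Matrix.trace, Matrix.diag, Matrix.mul_apply,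
      Fin.sum_univ_four, Matrix.vecHead, Matrix.vecTail]
    norm_num
  · intro P0 P1 h0 h1 hsum hpt0 hpt1
    have e0 : 0 ≤ (P0 * (Ydual - ptB 0 - (1/2:ℂ) • rho0)).trace := trace_mul_nonneg h0 hA0
    have e1 : 0 ≤ (P1 * (Ydual - ptB Q1dual - (1/2:ℂ) • rhoAnti)).trace :=
      trace_mul_nonneg h1 hA1
    have e2 : 0 ≤ (ptB P1 * Q1dual).trace := trace_mul_nonneg hpt1 hQ1
    have swap : (P1 * ptB Q1dual).trace = (ptB P1 * Q1dual).trace := trace_ptB_swap _ _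
    have hY : (P0 * Ydual).trace + (P1 * Ydual).trace = Ydual.trace := by
      rw [← Matrix.trace_add, ← Matrix.add_mul, hsum, Matrix.one_mul]
    have expand : (1/2:ℂ) * ((P0 * rho0 + P1 * rhoAnti).trace)
        = Ydual.trace - (P0 * (Ydual - ptB 0 - (1/2:ℂ) • rho0)).trace
          - (P1 * (Ydual - ptB Q1dual - (1/2:ℂ) • rhoAnti)).trace
          - (ptB P1 * Q1dual).trace := by
      rw [← swap, ptB_zero]
      simp only [Matrix.mul_sub, Matrix.trace_sub, Matrix.trace_add, Matrix.mul_smul,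
        Matrix.trace_smul, Matrix.mul_zero, Matrix.trace_zero, smul_eq_mul]
      rw [← hY]
      ring
    have hle : (1/2:ℂ) * ((P0 * rho0 + P1 * rhoAnti).trace) ≤ Ydual.trace := by
      rw [expand]
      calc Ydual.trace - _ - _ - _ ≤ Ydual.trace - _ - _ := sub_le_self _ e2
        _ ≤ Ydual.trace - _ := sub_le_self _ e1
        _ ≤ Ydual.trace := sub_le_self _ e0
    rw [hYtr] at hle
    have := (Complex.le_def.mp hle).1
    simpa using this
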